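/- arXiv:1512.07319 — 6 statements merged into one kernel-verified Lean document; each statement's English description precedes it below -/
import Mathlib

section
/- The partial communication function γ on cast and arrive actions is associative: for any message m, ranges R, and address sets H, K, H', K', we have γ(γ(a,b),c) = γ(a,γ(b,c)) whenever either side is defined, where γ(R:*cast(m), H¬K:arrive(m)) = γ(H¬K:arrive(m), R:*cast(m)) = R:*cast(m) provided H ⊆ R and K ∩ R = ∅, and γ(H¬K:arrive(m), H'¬K':arrive(m)) = (H∪H')¬(K∪K'):arrive(m). -/
/-- Actions of the network layer: cast and arrive (plus possibly others). -/
inductive Act (IP MSG : Type) : Type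
  | cast (R : Set IP) (m : MSG)
  | arrive (H K : Set IP) (m : MSG)
  | other

open Classical in
/-- The partial communication function γ, defined only on the listed pairs. -/
noncomputable def gamma {IP MSG : Type} : Act IP MSG → Act IP MSG → Option (Act IP MSG)
  | .cast R m, .arrive H K m' =>
      if m' = m ∧ H ⊆ R ∧ K ∩ R = ∅ then some (.cast R m) else none
  | .arrive H K m', .cast R m =>
      if m' = m ∧ H ⊆ R ∧ K ∩ R = ∅ then some (.cast R m) else none
  | .arrive H K m, .arrive H' K' m' =>
      if m' = m then some (.arrive (H ∪ H') (K ∪ K') m) else none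
  | _, _ => none

/-- γ is associative as a partial function: whenever either of γ(γ(a,b),c) and
γ(a,γ(b,c)) is defined, both are defined and they are equal. -/
theorem gamma_assoc {IP MSG : Type} (a b c : Act IP MSG)
    (hdef : ((gamma a b).bind (fun x => gamma x c)).isSome ∨
            ((gamma b c).bind (fun x => gamma a x)).isSome) :
    (gamma a b).bind (fun x => gamma x c) = (gamma b c).bind (fun x => gamma a x) := by
  rcases a with ⟨R,m⟩|⟨H,K,m⟩|_ <;> rcases b with ⟨R',m'⟩|⟨H',K',m'⟩|_ <;>
    rcases c with ⟨R'',m''⟩|⟨H'',K'',m''⟩|_ <;>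
    simp only [gamma, Option.bind, Option.isSome] at * <;>
    split_ifs at * <;>
    simp_all [gamma, Set.union_subset_iff, Set.union_inter_distrib_right,
      Set.union_empty_iff, Set.union_assoc] <;>
    split_ifs at hdef <;>
    simp_all [Set.union_subset_iff, Set.union_inter_distrib_right, Set.union_empty_iff]
end

section
/- The parallel composition operator ⟨⟨ for processes on a single node is associative up to strong bisimilarity: (P ⟨⟨ Q) ⟨⟨ R is strongly bisimilar to P ⟨⟨ (Q ⟨⟨ R). -/
/-- A labelled transition system. -/
structure LTS (S L : Type) where
  tr : S → L → S → Prop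

/-- `R` is a strong bisimulation on the LTS. -/
def IsBisim {S L : Type} (lts : LTS S L) (R : S → S → Prop) : Prop :=
  ∀ p q, R p q →
    (∀ a p', lts.tr p a p' → ∃ q', lts.tr q a q' ∧ R p' q') ∧
    (∀ a q', lts.tr q a q' → ∃ p', lts.tr p a p' ∧ R p' q')

/-- Two states are strongly bisimilar if some strong bisimulation relates them. -/
def Bisimilar {S L : Type} (lts : LTS S L) (p q : S) : Prop :=
  ∃ R, IsBisim lts R ∧ R p q

/-- Labels for processes running on a single node. -/
inductive PLab (MSG A : Type) : Type
  | receive (m : MSG)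
  | send (m : MSG)
  | tau
  | other (a : A)

/-- Process expressions: base sequential processes and parallel compositions P ⟨⟨ Q. -/
inductive Proc (σ : Type) : Type
  | base (s : σ)
  | par (P Q : Proc σ)

/-- Operational semantics of ⟨⟨: non-receive actions of the left component and
non-send actions of the right component interleave; a receive(m) of the left
synchronizes with a send(m) of the right into τ. -/
inductive PStep {σ MSG A : Type} (base : σ → PLab MSG A → σ → Prop) :
    Proc σ → PLab MSG A → Proc σ → Prop
  | base {s a s'} : base s a s' → PStep base (.base s) a (.base s')
  | left {P a P' Q} : PStep base P a P' → (∀ m, a ≠ .receive m) →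
      PStep base (.par P Q) a (.par P' Q)
  | right {P Q a Q'} : PStep base Q a Q' → (∀ m, a ≠ .send m) →
      PStep base (.par P Q) a (.par P Q')
  | sync {P Q m P' Q'} : PStep base P (.receive m) P' → PStep base Q (.send m) Q' →
      PStep base (.par P Q) .tau (.par P' Q')

/-- The LTS of processes on a single node. -/
def procLTS {σ MSG A : Type} (base : σ → PLab MSG A → σ → Prop) :
    LTS (Proc σ) (PLab MSG A) := ⟨PStep base⟩

/-- The operator ⟨⟨ is associative up to strong bisimilarity. -/
theorem parl_assoc {σ MSG A : Type} (base : σ → PLab MSG A → σ → Prop)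
    (P Q R : Proc σ) :
    Bisimilar (procLTS base) ((P.par Q).par R) (P.par (Q.par R)) := by
  refine ⟨fun X Y => ∃ P Q R, X = (P.par Q).par R ∧ Y = P.par (Q.par R), ?_,
    P, Q, R, rfl, rfl⟩
  rintro _ _ ⟨P, Q, R, rfl, rfl⟩
  constructor
  · rintro a X' h
    rcases h with _ | ⟨hPQ, hnr⟩ | ⟨hR, hns⟩ | ⟨hPQ, hR⟩
    · -- (P‖Q) →a, a not receive
      rcases hPQ with _ | ⟨hP, _⟩ | ⟨hQ, hns⟩ | ⟨hP, hQ⟩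
      · exact ⟨_, .left hP hnr, _, _, _, rfl, rfl⟩
      · exact ⟨_, .right (.left hQ hnr) hns, _, _, _, rfl, rfl⟩
      · exact ⟨_, .sync hP (.left hQ (fun m => nofun)), _, _, _, rfl, rfl⟩
    · exact ⟨_, .right (.right hR hns) hns, _, _, _, rfl, rfl⟩
    · -- sync: (P‖Q) →receive m, R →send m
      rcases hPQ with _ | ⟨hP, hnr⟩ | ⟨hQ, _⟩ | _
      · exact absurd rfl (hnr _)
      · exact ⟨_, .right (.sync hQ hR) (fun m => nofun), _, _, _, rfl, rfl⟩
  · rintro a Y' h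
    rcases h with _ | ⟨hP, hnr⟩ | ⟨hQR, hns⟩ | ⟨hP, hQR⟩
    · exact ⟨_, .left (.left hP hnr) hnr, _, _, _, rfl, rfl⟩
    · rcases hQR with _ | ⟨hQ, hnr⟩ | ⟨hR, _⟩ | ⟨hQ, hR⟩
      · exact ⟨_, .left (.right hQ hns) hnr, _, _, _, rfl, rfl⟩
      · exact ⟨_, .right hR hns, _, _, _, rfl, rfl⟩
      · exact ⟨_, .sync (.right hQ (fun m => nofun)) hR, _, _, _, rfl, rfl⟩
    · rcases hQR with _ | ⟨hQ, _⟩ | ⟨_, hns⟩ | _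
      · exact ⟨_, .left (.sync hP hQ) (fun m => nofun), _, _, _, rfl, rfl⟩
      · exact absurd rfl (hns _)
end

section
/- The parallel composition operator ∥ for network expressions is associative up to strong bisimilarity: (M ∥ N) ∥ L is strongly bisimilar to M ∥ (N ∥ L). -/
/-- Labels for network expressions. -/
inductive NLab (IP MSG DATA : Type) : Type
  | cast (R : Set IP) (m : MSG)
  | arrive (H K : Set IP) (m : MSG)
  | deliver (ip : IP) (d : DATA)
  | tau
  | connect (ip ip' : IP)
  | disconnect (ip ip' : IP)
  | newpkt (ip : IP) (d : DATA) (dip : IP)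

/-- Network expressions: nodes (abstract states) and parallel compositions M ∥ N. -/
inductive Net (σ : Type) : Type
  | node (s : σ)
  | par (M N : Net σ)

/-- Labels that simply interleave in a parallel composition. -/
def Interleavable {IP MSG DATA : Type} : NLab IP MSG DATA → Prop
  | .deliver _ _ => True
  | .tau => True
  | _ => False

/-- Connect and disconnect labels, performed by all components simultaneously
in the symmetric variant of the semantics. -/
def ConnLab {IP MSG DATA : Type} : NLab IP MSG DATA → Prop
  | .connect _ _ => True
  | .disconnect _ _ => True
  | _ => False

/-- Operational semantics of ∥ (symmetric variant): a cast of one side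
synchronizes with an arrive of the other side (side conditions H ⊆ R,
K ∩ R = ∅, yielding the cast), two arrives for the same message synchronize
into an arrive with unioned sets, deliver and τ interleave, and
connect/disconnect are performed by all components simultaneously. -/
inductive NStep {σ IP MSG DATA : Type} (base : σ → NLab IP MSG DATA → σ → Prop) :
    Net σ → NLab IP MSG DATA → Net σ → Prop
  | node {s a s'} : base s a s' → NStep base (.node s) a (.node s')
  | castL {M M' N N' R H K m} : NStep base M (.cast R m) M' →
      NStep base N (.arrive H K m) N' → H ⊆ R → K ∩ R = ∅ →
      NStep base (.par M N) (.cast R m) (.par M' N')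
  | castR {M M' N N' R H K m} : NStep base N (.cast R m) N' →
      NStep base M (.arrive H K m) M' → H ⊆ R → K ∩ R = ∅ →
      NStep base (.par M N) (.cast R m) (.par M' N')
  | arrive {M M' N N' H K H' K' m} : NStep base M (.arrive H K m) M' →
      NStep base N (.arrive H' K' m) N' →
      NStep base (.par M N) (.arrive (H ∪ H') (K ∪ K') m) (.par M' N')
  | interL {M M' N a} : NStep base M a M' → Interleavable a →
      NStep base (.par M N) a (.par M' N)
  | interR {M N N' a} : NStep base N a N' → Interleavable a →
      NStep base (.par M N) a (.par M N')
  | conn {M M' N N' a} : NStep base M a M' → NStep base N a N' → ConnLab a →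
      NStep base (.par M N) a (.par M' N')

/-- The LTS of network expressions. -/
def netLTS {σ IP MSG DATA : Type} (base : σ → NLab IP MSG DATA → σ → Prop) :
    LTS (Net σ) (NLab IP MSG DATA) := ⟨NStep base⟩

private lemma net_inter_conn_elim {IP MSG DATA : Type} {a : NLab IP MSG DATA}
    {C : Prop} (h1 : Interleavable a) (h2 : ConnLab a) : C := by
  cases a <;> first | exact (h1 : False).elim | exact (h2 : False).elim

private lemma net_assoc_fwd {σ IP MSG DATA : Type}
    {base : σ → NLab IP MSG DATA → σ → Prop}
    {A B C : Net σ} {a : NLab IP MSG DATA} {P : Net σ}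
    (h : NStep base ((A.par B).par C) a P) :
    ∃ (A' B' C' : Net σ), P = (A'.par B').par C' ∧
      NStep base (A.par (B.par C)) a (A'.par (B'.par C')) := by
  cases h with
  | castL hAB hC hH hK =>
    cases hAB with
    | castL hA hB hH' hK' =>
      exact ⟨_, _, _, rfl, NStep.castL hA (NStep.arrive hB hC)
        (Set.union_subset hH' hH)
        (by rw [Set.union_inter_distrib_right, hK', hK, Set.union_empty])⟩
    | castR hB hA hH' hK' =>
      exact ⟨_, _, _, rfl, NStep.castR (NStep.castL hB hC hH hK) hA hH' hK'⟩
    | interL _ hI => exact (hI : False).elim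
    | interR _ hI => exact (hI : False).elim
    | conn _ _ hCn => exact (hCn : False).elim
  | castR hC hAB hH hK =>
    cases hAB with
    | arrive hA hB =>
      rw [Set.union_inter_distrib_right] at hK
      obtain ⟨hK1, hK2⟩ := Set.union_empty_iff.mp hK
      obtain ⟨hH1, hH2⟩ := Set.union_subset_iff.mp hH
      exact ⟨_, _, _, rfl, NStep.castR (NStep.castR hC hB hH2 hK2) hA hH1 hK1⟩
    | interL _ hI => exact (hI : False).elim
    | interR _ hI => exact (hI : False).elim
    | conn _ _ hCn => exact (hCn : False).elim
  | arrive hAB hC =>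
    cases hAB with
    | arrive hA hB =>
      refine ⟨_, _, _, rfl, ?_⟩
      rw [Set.union_assoc, Set.union_assoc]
      exact NStep.arrive hA (NStep.arrive hB hC)
    | interL _ hI => exact (hI : False).elim
    | interR _ hI => exact (hI : False).elim
    | conn _ _ hCn => exact (hCn : False).elim
  | interL hAB hI =>
    cases hAB with
    | castL _ _ _ _ => exact (hI : False).elim
    | castR _ _ _ _ => exact (hI : False).elim
    | arrive _ _ => exact (hI : False).elim
    | interL hA _ => exact ⟨_, _, _, rfl, NStep.interL hA hI⟩
    | interR hB _ => exact ⟨_, _, _, rfl, NStep.interR (NStep.interL hB hI) hI⟩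
    | conn _ _ hCn => exact net_inter_conn_elim hI hCn
  | interR hC hI => exact ⟨_, _, _, rfl, NStep.interR (NStep.interR hC hI) hI⟩
  | conn hAB hC hCn =>
    cases hAB with
    | castL _ _ _ _ => exact (hCn : False).elim
    | castR _ _ _ _ => exact (hCn : False).elim
    | arrive _ _ => exact (hCn : False).elim
    | interL _ hI => exact net_inter_conn_elim hI hCn
    | interR _ hI => exact net_inter_conn_elim hI hCn
    | conn hA hB _ =>
      exact ⟨_, _, _, rfl, NStep.conn hA (NStep.conn hB hC hCn) hCn⟩

private lemma net_assoc_bwd {σ IP MSG DATA : Type}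
    {base : σ → NLab IP MSG DATA → σ → Prop}
    {A B C : Net σ} {a : NLab IP MSG DATA} {Q : Net σ}
    (h : NStep base (A.par (B.par C)) a Q) :
    ∃ (A' B' C' : Net σ), Q = A'.par (B'.par C') ∧
      NStep base ((A.par B).par C) a ((A'.par B').par C') := by
  cases h with
  | castL hA hBC hH hK =>
    cases hBC with
    | arrive hB hC =>
      rw [Set.union_inter_distrib_right] at hK
      obtain ⟨hK1, hK2⟩ := Set.union_empty_iff.mp hK
      obtain ⟨hH1, hH2⟩ := Set.union_subset_iff.mp hH
      exact ⟨_, _, _, rfl, NStep.castL (NStep.castL hA hB hH1 hK1) hC hH2 hK2⟩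
    | interL _ hI => exact (hI : False).elim
    | interR _ hI => exact (hI : False).elim
    | conn _ _ hCn => exact (hCn : False).elim
  | castR hBC hA hH hK =>
    cases hBC with
    | castL hB hC hH' hK' =>
      exact ⟨_, _, _, rfl, NStep.castL (NStep.castR hB hA hH hK) hC hH' hK'⟩
    | castR hC hB hH' hK' =>
      exact ⟨_, _, _, rfl, NStep.castR hC (NStep.arrive hA hB)
        (Set.union_subset hH hH')
        (by rw [Set.union_inter_distrib_right, hK, hK', Set.union_empty])⟩
    | interL _ hI => exact (hI : False).elim
    | interR _ hI => exact (hI : False).elim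
    | conn _ _ hCn => exact (hCn : False).elim
  | arrive hA hBC =>
    cases hBC with
    | arrive hB hC =>
      refine ⟨_, _, _, rfl, ?_⟩
      rw [← Set.union_assoc, ← Set.union_assoc]
      exact NStep.arrive (NStep.arrive hA hB) hC
    | interL _ hI => exact (hI : False).elim
    | interR _ hI => exact (hI : False).elim
    | conn _ _ hCn => exact (hCn : False).elim
  | interL hA hI => exact ⟨_, _, _, rfl, NStep.interL (NStep.interL hA hI) hI⟩
  | interR hBC hI =>
    cases hBC with
    | castL _ _ _ _ => exact (hI : False).elim
    | castR _ _ _ _ => exact (hI : False).elim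
    | arrive _ _ => exact (hI : False).elim
    | interL hB _ => exact ⟨_, _, _, rfl, NStep.interL (NStep.interR hB hI) hI⟩
    | interR hC _ => exact ⟨_, _, _, rfl, NStep.interR hC hI⟩
    | conn _ _ hCn => exact net_inter_conn_elim hI hCn
  | conn hA hBC hCn =>
    cases hBC with
    | castL _ _ _ _ => exact (hCn : False).elim
    | castR _ _ _ _ => exact (hCn : False).elim
    | arrive _ _ => exact (hCn : False).elim
    | interL _ hI => exact net_inter_conn_elim hI hCn
    | interR _ hI => exact net_inter_conn_elim hI hCn
    | conn hB hC _ =>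
      exact ⟨_, _, _, rfl, NStep.conn (NStep.conn hA hB hCn) hC hCn⟩

/-- The network parallel composition ∥ is associative up to strong bisimilarity. -/
theorem net_par_assoc {σ IP MSG DATA : Type} (base : σ → NLab IP MSG DATA → σ → Prop)
    (M N L : Net σ) :
    Bisimilar (netLTS base) ((M.par N).par L) (M.par (N.par L)) := by
  refine ⟨fun p q => ∃ A B C, p = (A.par B).par C ∧ q = A.par (B.par C), ?_,
    M, N, L, rfl, rfl⟩
  rintro p q ⟨A, B, C, rfl, rfl⟩
  constructor
  · intro a p' hp
    obtain ⟨A', B', C', rfl, hq⟩ := net_assoc_fwd hp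
    exact ⟨_, hq, A', B', C', rfl, rfl⟩
  · intro a q' hq
    obtain ⟨A', B', C', rfl, hp⟩ := net_assoc_bwd hq
    exact ⟨_, hp, A', B', C', rfl, rfl⟩
end

section
/- Strong bisimilarity is a congruence for the parallel composition ⟨⟨: if P₁ is strongly bisimilar to P₂ and Q₁ is strongly bisimilar to Q₂, then P₁ ⟨⟨ Q₁ is strongly bisimilar to P₂ ⟨⟨ Q₂. -/
/-- Strong bisimilarity is a congruence for ⟨⟨. -/
theorem parl_congruence {σ MSG A : Type} (base : σ → PLab MSG A → σ → Prop)
    (P₁ P₂ Q₁ Q₂ : Proc σ)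
    (hP : Bisimilar (procLTS base) P₁ P₂) (hQ : Bisimilar (procLTS base) Q₁ Q₂) :
    Bisimilar (procLTS base) (P₁.par Q₁) (P₂.par Q₂) := by
  obtain ⟨R₁, hR₁, hPR⟩ := hP
  obtain ⟨R₂, hR₂, hQR⟩ := hQ
  refine ⟨fun x y => ∃ P P' Q Q', x = Proc.par P Q ∧ y = Proc.par P' Q' ∧ R₁ P P' ∧ R₂ Q Q',
    ?_, P₁, P₂, Q₁, Q₂, rfl, rfl, hPR, hQR⟩
  rintro _ _ ⟨P, P', Q, Q', rfl, rfl, hp, hq⟩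
  constructor
  · intro a x' hstep
    cases hstep with
    | left h hm =>
        obtain ⟨p', hp', hr⟩ := (hR₁ _ _ hp).1 _ _ h
        exact ⟨.par p' Q', PStep.left hp' hm, _, _, _, _, rfl, rfl, hr, hq⟩
    | right h hm =>
        obtain ⟨q', hq', hr⟩ := (hR₂ _ _ hq).1 _ _ h
        exact ⟨.par P' q', PStep.right hq' hm, _, _, _, _, rfl, rfl, hp, hr⟩
    | sync h1 h2 =>
        obtain ⟨p', hp', hr1⟩ := (hR₁ _ _ hp).1 _ _ h1
        obtain ⟨q', hq', hr2⟩ := (hR₂ _ _ hq).1 _ _ h2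
        exact ⟨.par p' q', PStep.sync hp' hq', _, _, _, _, rfl, rfl, hr1, hr2⟩
  · intro a x' hstep
    cases hstep with
    | left h hm =>
        obtain ⟨p', hp', hr⟩ := (hR₁ _ _ hp).2 _ _ h
        exact ⟨.par p' Q, PStep.left hp' hm, _, _, _, _, rfl, rfl, hr, hq⟩
    | right h hm =>
        obtain ⟨q', hq', hr⟩ := (hR₂ _ _ hq).2 _ _ h
        exact ⟨.par P q', PStep.right hq' hm, _, _, _, _, rfl, rfl, hp, hr⟩
    | sync h1 h2 =>
        obtain ⟨p', hp', hr1⟩ := (hR₁ _ _ hp).2 _ _ h1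
        obtain ⟨q', hq', hr2⟩ := (hR₂ _ _ hq).2 _ _ h2
        exact ⟨.par p' q', PStep.sync hp' hq', _, _, _, _, rfl, rfl, hr1, hr2⟩
end

section
/- The routing-table update function upd satisfies: the sequence number of the entry for a destination never decreases, i.e., for any routing table rt and new entry r = (dip, dsn, dsk, flag, hops, nhip, pre), sqn(upd(rt,r), dip) ≥ sqn(rt, dip). -/
/-- A routing table entry (dip, dsn, dsk, flag, hops, nhip, pre). -/
structure Entry (IP : Type) where
  dip : IP
  dsn : ℕ
  dsk : Bool
  valid : Bool
  hops : ℕ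
  nhip : IP
  pre : Set IP

/-- A routing table: a set of entries. -/
abbrev RT (IP : Type) := Set (Entry IP)

/-- The at-most-one-entry-per-destination invariant. -/
def UniqueDest {IP : Type} (rt : RT IP) : Prop :=
  ∀ e ∈ rt, ∀ e' ∈ rt, e.dip = e'.dip → e = e'

open Classical in
/-- The entry of `rt` for destination `dip`, if any. -/
noncomputable def entryFor {IP : Type} (rt : RT IP) (dip : IP) : Option (Entry IP) :=
  if h : ∃ e ∈ rt, e.dip = dip then some h.choose else none

/-- The sequence number of the entry for dip (0 if there is none). -/
noncomputable def sqn {IP : Type} (rt : RT IP) (dip : IP) : ℕ :=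
  (entryFor rt dip).elim 0 Entry.dsn

/-- The validity flag of the entry for dip, if any. -/
noncomputable def status {IP : Type} (rt : RT IP) (dip : IP) : Option Bool :=
  (entryFor rt dip).map Entry.valid

/-- The hop count of the entry for dip (0 if there is none). -/
noncomputable def dhops {IP : Type} (rt : RT IP) (dip : IP) : ℕ :=
  (entryFor rt dip).elim 0 Entry.hops

open Classical in
/-- The routing-table update function: insert r if rt has no entry for r.dip;
otherwise replace the existing entry by r iff r's sequence number is larger,
or it is equal and the existing entry is invalid or r's hop count is smaller;
otherwise leave the table unchanged. -/
noncomputable def upd {IP : Type} (rt : RT IP) (r : Entry IP) : RT IP :=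
  match entryFor rt r.dip with
  | none => rt ∪ {r}
  | some e =>
      if r.dsn > e.dsn ∨ (r.dsn = e.dsn ∧ (e.valid = false ∨ r.hops < e.hops))
      then {e' ∈ rt | e'.dip ≠ r.dip} ∪ {r}
      else rt


lemma entryFor_mem {IP : Type} {rt : RT IP} {dip : IP} {e : Entry IP}
    (h : entryFor rt dip = some e) : e ∈ rt ∧ e.dip = dip := by
  unfold entryFor at h
  split at h
  · next hex => cases h; exact hex.choose_spec
  · exact absurd h (by simp)

lemma entryFor_none {IP : Type} {rt : RT IP} {dip : IP}
    (h : entryFor rt dip = none) : ∀ e ∈ rt, e.dip ≠ dip := by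
  unfold entryFor at h
  split at h
  · exact absurd h (by simp)
  · next hex => intro e he hd; exact hex ⟨e, he, hd⟩

lemma sqn_of_unique {IP : Type} {s : RT IP} {r : Entry IP}
    (hr : r ∈ s) (huniq : ∀ e ∈ s, e.dip = r.dip → e = r) :
    sqn s r.dip = r.dsn := by
  unfold sqn
  rcases h : entryFor s r.dip with _ | e
  · exact absurd rfl (entryFor_none h r hr)
  · obtain ⟨hmem, hdip⟩ := entryFor_mem h
    rw [huniq e hmem hdip]; rfl

/-- upd never decreases the sequence number of the entry for the destination. -/
theorem sqn_upd_mono {IP : Type} (rt : RT IP) (r : Entry IP)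
    (hu : UniqueDest rt) :
    sqn (upd rt r) r.dip ≥ sqn rt r.dip := by
  unfold upd
  rcases h : entryFor rt r.dip with _ | e <;> dsimp only
  · unfold sqn; rw [h]; simp
  · obtain ⟨hmem, hdip⟩ := entryFor_mem h
    have hrt : sqn rt r.dip = e.dsn := by unfold sqn; rw [h]; rfl
    split_ifs
    · next hcond =>
      have : sqn ({e' ∈ rt | e'.dip ≠ r.dip} ∪ {r}) r.dip = r.dsn := by
        apply sqn_of_unique (by right; rfl)
        rintro e' (⟨_, hne⟩ | he') hd
        · exact absurd hd hne
        · exact he'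
      rw [this, hrt]
      rcases hcond with h1 | ⟨h2, _⟩
      · exact le_of_lt h1
      · exact le_of_eq h2.symm
    · exact le_refl _
end

section
/- If upd(rt, r) actually changes the entry for destination dip (i.e., the entry for dip in upd(rt,r) equals r and differs from the entry in rt), then either sqn(rt,dip) < dsn, or sqn(rt,dip) = dsn and (status(rt,dip) = invalid or hops < dhops(rt,dip)), or rt had no entry for dip at all. -/
/-- If upd(rt,r) actually changes the entry for destination dip = r.dip (the
entry for dip in upd(rt,r) is r and differs from the entry in rt), then either
sqn(rt,dip) < r.dsn, or sqn(rt,dip) = r.dsn and (the entry of rt for dip is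
invalid or r.hops < dhops(rt,dip)), or rt had no entry for dip at all. -/
theorem upd_change_characterisation {IP : Type} (rt : RT IP) (r : Entry IP)
    (hu : UniqueDest rt)
    (hchanged : entryFor (upd rt r) r.dip = some r ∧ entryFor rt r.dip ≠ some r) :
    sqn rt r.dip < r.dsn ∨
    (sqn rt r.dip = r.dsn ∧ (status rt r.dip = some false ∨ r.hops < dhops rt r.dip)) ∨
    entryFor rt r.dip = none := by
  obtain ⟨h1, h2⟩ := hchanged
  cases he : entryFor rt r.dip with
  | none => exact Or.inr (Or.inr rfl)
  | some e =>
    by_cases hc : r.dsn > e.dsn ∨ (r.dsn = e.dsn ∧ (e.valid = false ∨ r.hops < e.hops))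
    · simp only [sqn, status, dhops, he, Option.elim, Option.map, Option.some.injEq]
      rcases hc with h | ⟨h, h'⟩
      · exact Or.inl h
      · exact Or.inr (Or.inl ⟨h.symm, h'⟩)
    · simp only [upd, he, hc, if_false] at h1
      exact absurd (he.trans h1) h2
end
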